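/- arXiv:2412.06103 — 4 statements merged into one kernel-verified Lean document; each statement's English description precedes it below -/
import Mathlib

section
/- For positive integers n ≥ k ≥ 1, the number of equivalence classes of k-tuples of positive integers summing to n, where two tuples are equivalent iff one is a cyclic permutation of the other, equals N(n,k) = (1/k) · Σ_{d | gcd(n,k)} φ(d) · C(n/d − 1, k/d − 1), where φ is the Euler totient function. -/
/-- Compositions of `n` into `k` positive parts. -/
abbrev Composition' (n k : ℕ) : Type :=
  {a : Fin k → ℕ // (∀ i, 0 < a i) ∧ ∑ i, a i = n}

instance (n k : ℕ) : Finite (Composition' n k) := by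
  apply Finite.of_injective (fun a : Composition' n k => fun i => (⟨a.1 i, by
    have h1 : a.1 i ≤ n :=
      le_trans (Finset.single_le_sum (fun j _ => Nat.zero_le (a.1 j)) (Finset.mem_univ i))
        (le_of_eq a.2.2)
    omega⟩ : Fin (n+1)))
  intro a b h
  ext i
  exact congrArg Fin.val (congrFun h i)

lemma comp_zero_card {k : ℕ} (hk : 1 ≤ k) : Nat.card (Composition' 0 k) = 0 := by
  have : IsEmpty (Composition' 0 k) := ⟨fun a => by
    have h := a.2.1 ⟨0, hk⟩
    have hle : a.1 ⟨0, hk⟩ ≤ 0 :=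
      le_trans (Finset.single_le_sum (fun j _ => Nat.zero_le (a.1 j)) (Finset.mem_univ _))
        (le_of_eq a.2.2)
    omega⟩
  exact Nat.card_of_isEmpty

def compSuccEquiv (n k : ℕ) (hn : 1 ≤ n) :
    Composition' n (k+1) ≃ Σ m : Fin n, Composition' (n - 1 - m.val) k where
  toFun a := ⟨⟨a.1 0 - 1, by
      have h1 : a.1 0 ≤ n :=
        le_trans (Finset.single_le_sum (fun j _ => Nat.zero_le (a.1 j)) (Finset.mem_univ 0))
          (le_of_eq a.2.2)
      have h2 := a.2.1 0
      omega⟩,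
    ⟨fun i => a.1 i.succ, fun i => a.2.1 _, by
      show (∑ i : Fin k, a.1 i.succ) = n - 1 - (a.1 0 - 1)
      have h := a.2.2
      rw [Fin.sum_univ_succ] at h
      have h2 := a.2.1 0
      omega⟩⟩
  invFun x := ⟨Fin.cons (x.1.val + 1) x.2.1, by
    refine ⟨fun i => ?_, ?_⟩
    · refine Fin.cases ?_ ?_ i
      · simp
      · intro j; simpa using x.2.2.1 j
    · rw [Fin.sum_univ_succ]
      simp only [Fin.cons_zero, Fin.cons_succ]
      have h := x.2.2.2
      have h2 := x.1.2
      omega⟩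
  left_inv a := by
    apply Subtype.ext
    funext i
    refine Fin.cases ?_ ?_ i
    · have h2 := a.2.1 0
      simp only [Fin.cons_zero]
      omega
    · intro j; simp
  right_inv x := rfl

lemma hockey (t : ℕ) : ∀ N, ∑ i ∈ Finset.range N, Nat.choose i t = Nat.choose N (t+1) := by
  intro N
  induction N with
  | zero => simp
  | succ N ih =>
    rw [Finset.sum_range_succ, ih, Nat.choose_succ_succ (N) t, Nat.add_comm]

instance compVAdd (n k : ℕ) [NeZero k] : AddAction (Fin k) (Composition' n k) where
  vadd r a := ⟨fun i => a.1 (i + r), fun i => a.2.1 _, by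
    exact (Fintype.sum_equiv (Equiv.addRight r) _ _ (fun i => rfl)).trans a.2.2⟩
  zero_vadd a := Subtype.ext (funext fun i => by
    show a.1 (i + 0) = a.1 i
    rw [add_zero])
  add_vadd g h a := Subtype.ext (funext fun i => by
    show a.1 (i + (g + h)) = a.1 (i + g + h)
    rw [add_assoc])

lemma comp_card : ∀ k, 1 ≤ k → ∀ n, 1 ≤ n →
    Nat.card (Composition' n k) = Nat.choose (n - 1) (k - 1) := by
  intro k hk
  induction k, hk using Nat.le_induction with
  | base =>
    intro n hn
    have : Unique (Composition' n 1) := {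
      default := ⟨fun _ => n, fun _ => hn, by simp⟩
      uniq := fun a => by
        apply Subtype.ext
        funext i
        have h := a.2.2
        rw [Fin.sum_univ_one] at h
        rw [Subsingleton.elim i 0]
        exact h }
    simp [Nat.card_unique]
  | succ k hk ih =>
    intro n hn
    rw [Nat.card_congr (compSuccEquiv n k hn)]
    haveI : ∀ m : Fin n, Fintype (Composition' (n - 1 - m.val) k) := fun m => Fintype.ofFinite _
    rw [Nat.card_eq_fintype_card, Fintype.card_sigma]
    have hterm : ∀ m : Fin n, Fintype.card (Composition' (n - 1 - m.val) k)
        = if m.val + 2 ≤ n then Nat.choose (n - 2 - m.val) (k - 1) else 0 := by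
      intro m
      by_cases h : m.val + 2 ≤ n
      · rw [if_pos h, ← Nat.card_eq_fintype_card, ih (n - 1 - m.val) (by omega)]
        congr 1
        omega
      · rw [if_neg h, ← Nat.card_eq_fintype_card]
        have h0 : n - 1 - m.val = 0 := by omega
        rw [h0, comp_zero_card hk]
    rw [Finset.sum_congr rfl (fun m _ => hterm m)]
    rw [Fin.sum_univ_eq_sum_range (fun m => if m + 2 ≤ n then Nat.choose (n - 2 - m) (k - 1) else 0)]
    have hre : ∑ m ∈ Finset.range n, (if m + 2 ≤ n then Nat.choose (n - 2 - m) (k - 1) else 0)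
        = ∑ j ∈ Finset.range n, (if 1 ≤ j then Nat.choose (j - 1) (k - 1) else 0) := by
      rw [← Finset.sum_range_reflect (fun j => if 1 ≤ j then Nat.choose (j - 1) (k - 1) else 0) n]
      apply Finset.sum_congr rfl
      intro m hm
      rw [Finset.mem_range] at hm
      by_cases h : m + 2 ≤ n
      · rw [if_pos h, if_pos (show 1 ≤ n - 1 - m by omega)]
        congr 1
        omega
      · rw [if_neg h, if_neg (show ¬ 1 ≤ n - 1 - m by omega)]
    rw [hre]
    obtain ⟨n', rfl⟩ : ∃ n', n = n' + 1 := ⟨n - 1, by omega⟩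
    rw [Finset.sum_range_succ' (fun j => if 1 ≤ j then Nat.choose (j - 1) (k - 1) else 0) n']
    rw [if_neg (show ¬ (1:ℕ) ≤ 0 by omega), add_zero]
    rw [Finset.sum_congr rfl (fun i _ => if_pos (show 1 ≤ i + 1 by omega))]
    simp only [Nat.add_sub_cancel]
    rw [hockey (k - 1) n']
    have hk1 : k - 1 + 1 = k := by omega
    rw [hk1]

lemma period_mul {A : ℕ → ℕ} {p : ℕ} (hp : ∀ m, A (m + p) = A m) :
    ∀ t m, A (m + t * p) = A m
  | 0, m => by simp
  | t+1, m => by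
    rw [show m + (t+1)*p = (m + t*p) + p by ring, hp, period_mul hp t m]

lemma period_gcd {A : ℕ → ℕ} : ∀ p q : ℕ, (∀ m, A (m + p) = A m) → (∀ m, A (m + q) = A m) →
    ∀ m, A (m + Nat.gcd p q) = A m := by
  intro p q
  induction p, q using Nat.gcd.induction with
  | H0 q => intro _ hq m; rw [Nat.gcd_zero_left]; exact hq m
  | H1 p q hp ih =>
    intro h1 h2 m
    rw [Nat.gcd_rec]
    refine ih ?_ h1 m
    intro m'
    have h3 : A (m' + q % p + q / p * p) = A (m' + q % p) := period_mul h1 (q / p) (m' + q % p)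
    rw [show m' + q % p + q / p * p = m' + q by rw [add_assoc, Nat.mod_add_div']] at h3
    rw [← h3]
    exact h2 m'

lemma sum_period' {k d e : ℕ} (hd : 0 < d) (hk : k = e * d) (c : Fin k → ℕ) (b : Fin d → ℕ)
    (h : ∀ i : Fin k, c i = b ⟨i.val % d, Nat.mod_lt _ hd⟩) :
    ∑ i, c i = e * ∑ j, b j := by
  subst hk
  rw [← Equiv.sum_comp finProdFinEquiv c]
  rw [Fintype.sum_prod_type]
  have hterm : ∀ (x : Fin e) (y : Fin d), c (finProdFinEquiv (x, y)) = b y := by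
    intro x y
    rw [h]
    congr 1
    apply Fin.ext
    show (y.val + d * x.val) % d = y.val
    rw [Nat.add_mul_mod_self_left, Nat.mod_eq_of_lt y.2]
  calc ∑ x : Fin e, ∑ y : Fin d, c (finProdFinEquiv (x, y))
      = ∑ x : Fin e, ∑ y : Fin d, b y :=
        Finset.sum_congr rfl (fun x _ => Finset.sum_congr rfl (fun y _ => hterm x y))
    _ = e * ∑ j, b j := by
        rw [Finset.sum_const, Finset.card_univ, Fintype.card_fin, smul_eq_mul]

lemma fixed_mod {n k : ℕ} [NeZero k] (r : Fin k) (a : Composition' n k)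
    (ha : r +ᵥ a = a) (i : Fin k) :
    a.1 i = a.1 ⟨i.val % Nat.gcd r.val k,
      lt_of_lt_of_le (Nat.mod_lt _ (Nat.gcd_pos_of_pos_right _ (Nat.pos_of_ne_zero (NeZero.ne k))))
        (Nat.le_of_dvd (Nat.pos_of_ne_zero (NeZero.ne k)) (Nat.gcd_dvd_right _ _))⟩ := by
  have hk : 0 < k := Nat.pos_of_ne_zero (NeZero.ne k)
  have hd : 0 < Nat.gcd r.val k := Nat.gcd_pos_of_pos_right _ hk
  set d := Nat.gcd r.val k with hdd
  have hfix : ∀ j : Fin k, a.1 (j + r) = a.1 j := by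
    intro j
    conv_rhs => rw [← ha]
    rfl
  set A : ℕ → ℕ := fun m => a.1 ⟨m % k, Nat.mod_lt _ hk⟩ with hA
  have h1 : ∀ m, A (m + r.val) = A m := by
    intro m
    show a.1 ⟨(m + r.val) % k, _⟩ = a.1 ⟨m % k, _⟩
    have : (⟨(m + r.val) % k, Nat.mod_lt _ hk⟩ : Fin k) = ⟨m % k, Nat.mod_lt _ hk⟩ + r := by
      apply Fin.ext
      rw [Fin.val_add]
      show (m + r.val) % k = (m % k + r.val) % k
      rw [Nat.mod_add_mod]
    rw [this, hfix]
  have h2 : ∀ m, A (m + k) = A m := by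
    intro m
    show a.1 ⟨(m + k) % k, _⟩ = a.1 ⟨m % k, _⟩
    exact congrArg a.1 (Fin.ext (Nat.add_mod_right m k))
  have hgcd : ∀ m, A (m + d) = A m := period_gcd r.val k h1 h2
  have step1 : a.1 i = A i.val := by
    show a.1 i = a.1 ⟨i.val % k, _⟩
    exact congrArg a.1 (Fin.ext (show i.val = i.val % k from (Nat.mod_eq_of_lt i.2).symm))
  have step2 : A i.val = A (i.val % d) := by
    conv_lhs => rw [← Nat.mod_add_div' i.val d]
    exact period_mul hgcd (i.val / d) (i.val % d)
  rw [step1, step2]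
  show a.1 ⟨i.val % d % k, _⟩ = a.1 ⟨i.val % d, _⟩
  exact congrArg a.1 (Fin.ext (show i.val % d % k = i.val % d from
    Nat.mod_eq_of_lt (lt_of_lt_of_le (Nat.mod_lt _ hd)
      (Nat.le_of_dvd hk (Nat.gcd_dvd_right _ _)))))

noncomputable def fixedEquiv (n k : ℕ) [NeZero k] (r : Fin k) :
    (AddAction.fixedBy (Composition' n k) r) ≃
      {b : Fin (Nat.gcd r.val k) → ℕ //
        (∀ j, 0 < b j) ∧ (k / Nat.gcd r.val k) * ∑ j, b j = n} := by
  have hk : 0 < k := Nat.pos_of_ne_zero (NeZero.ne k)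
  have hd : 0 < Nat.gcd r.val k := Nat.gcd_pos_of_pos_right _ hk
  have hdk : Nat.gcd r.val k ∣ k := Nat.gcd_dvd_right _ _
  have hdr : Nat.gcd r.val k ∣ r.val := Nat.gcd_dvd_left _ _
  have hdk' : Nat.gcd r.val k ≤ k := Nat.le_of_dvd hk hdk
  have hke : k = (k / Nat.gcd r.val k) * Nat.gcd r.val k := (Nat.div_mul_cancel hdk).symm
  exact {
    toFun := fun x => ⟨fun j => x.1.1 ⟨j.val, lt_of_lt_of_le j.2 hdk'⟩,
      fun j => x.1.2.1 _, by
        rw [← sum_period' hd hke x.1.1 _ (fun i => fixed_mod r x.1 x.2 i)]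
        exact x.1.2.2⟩
    invFun := fun b => ⟨⟨fun i => b.1 ⟨i.val % Nat.gcd r.val k, Nat.mod_lt _ hd⟩,
      fun i => b.2.1 _, by
        rw [sum_period' hd hke _ b.1 (fun i => rfl)]
        exact b.2.2⟩, by
      show _ +ᵥ _ = _
      apply Subtype.ext
      funext i
      show b.1 ⟨(i + r).val % Nat.gcd r.val k, _⟩ = b.1 ⟨i.val % Nat.gcd r.val k, _⟩
      apply congrArg b.1
      apply Fin.ext
      show (i + r).val % Nat.gcd r.val k = i.val % Nat.gcd r.val k
      have hr0 : r.val % Nat.gcd r.val k = 0 := Nat.mod_eq_zero_of_dvd hdr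
      rw [Fin.val_add, Nat.mod_mod_of_dvd _ hdk, Nat.add_mod, hr0, add_zero,
        Nat.mod_mod_of_dvd _ (dvd_refl _)]⟩
    left_inv := fun x => by
      apply Subtype.ext
      apply Subtype.ext
      funext i
      exact (fixed_mod r x.1 x.2 i).symm
    right_inv := fun b => by
      apply Subtype.ext
      funext j
      show b.1 ⟨j.val % Nat.gcd r.val k, _⟩ = b.1 j
      apply congrArg b.1
      apply Fin.ext
      exact Nat.mod_eq_of_lt j.2 }

lemma fixedBy_card {n k : ℕ} [NeZero k] (hn : 1 ≤ n) (r : Fin k) :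
    Nat.card (AddAction.fixedBy (Composition' n k) r) =
      if (k / Nat.gcd r.val k) ∣ n then
        Nat.choose (n / (k / Nat.gcd r.val k) - 1) (Nat.gcd r.val k - 1)
      else 0 := by
  have hk : 0 < k := Nat.pos_of_ne_zero (NeZero.ne k)
  have hd : 0 < Nat.gcd r.val k := Nat.gcd_pos_of_pos_right _ hk
  rw [Nat.card_congr (fixedEquiv n k r)]
  by_cases hdvd : (k / Nat.gcd r.val k) ∣ n
  · rw [if_pos hdvd]
    have he : 0 < k / Nat.gcd r.val k := Nat.div_pos (Nat.le_of_dvd hk (Nat.gcd_dvd_right _ _)) hd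
    have heq : {b : Fin (Nat.gcd r.val k) → ℕ //
          (∀ j, 0 < b j) ∧ (k / Nat.gcd r.val k) * ∑ j, b j = n}
        ≃ Composition' (n / (k / Nat.gcd r.val k)) (Nat.gcd r.val k) := by
      apply Equiv.subtypeEquivRight
      intro b
      apply and_congr_right
      intro _
      constructor
      · intro h
        rw [← h, Nat.mul_div_cancel_left _ he]
      · intro h
        rw [h, Nat.mul_div_cancel' hdvd]
    rw [Nat.card_congr heq]
    exact comp_card _ hd _ (Nat.div_pos (Nat.le_of_dvd hn hdvd) he)
  · rw [if_neg hdvd]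
    have : IsEmpty {b : Fin (Nat.gcd r.val k) → ℕ //
        (∀ j, 0 < b j) ∧ (k / Nat.gcd r.val k) * ∑ j, b j = n} :=
      ⟨fun b => hdvd ⟨∑ j, b.1 j, b.2.2.symm⟩⟩
    exact Nat.card_of_isEmpty

lemma count_gcd (d e : ℕ) (hd : 0 < d) :
    ((Finset.range (d * e)).filter (fun m => Nat.gcd m (d * e) = d)).card
      = Nat.totient e := by
  rw [Nat.totient_eq_card_coprime]
  have himg : (Finset.range (d * e)).filter (fun m => Nat.gcd m (d * e) = d)
      = ((Finset.range e).filter (fun t => e.Coprime t)).image (fun t => t * d) := by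
    ext m
    simp only [Finset.mem_filter, Finset.mem_range, Finset.mem_image]
    constructor
    · rintro ⟨hlt, hgcd⟩
      have hdm : d ∣ m := hgcd ▸ Nat.gcd_dvd_left m (d * e)
      obtain ⟨t, rfl⟩ := hdm
      refine ⟨t, ⟨?_, ?_⟩, by ring⟩
      · rw [mul_comm d t, mul_comm d e] at hlt
        exact Nat.lt_of_mul_lt_mul_right hlt
      · have h1 : Nat.gcd (t * d) (e * d) = Nat.gcd t e * d := Nat.gcd_mul_right t d e
        rw [mul_comm d t, mul_comm d e] at hgcd
        rw [hgcd] at h1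
        have : Nat.gcd t e = 1 := by
          have := h1.symm
          nlinarith [Nat.eq_of_mul_eq_mul_right hd (show Nat.gcd t e * d = 1 * d by omega)]
        rw [Nat.coprime_comm]
        exact this
    · rintro ⟨t, ⟨hlt, hcop⟩, rfl⟩
      constructor
      · calc t * d < e * d := (Nat.mul_lt_mul_right hd).mpr hlt
          _ = d * e := mul_comm e d
      · rw [show d * e = e * d from mul_comm d e, Nat.gcd_mul_right t d e]
        have : Nat.gcd t e = 1 := Nat.coprime_comm.mp hcop
        rw [this, one_mul]
  rw [himg, Finset.card_image_of_injective _ (fun a b hab => Nat.eq_of_mul_eq_mul_right hd hab)]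

lemma gcd_sum (k : ℕ) (hk : 0 < k) (F : ℕ → ℕ) :
    ∑ m ∈ Finset.range k, F (Nat.gcd m k)
      = ∑ d ∈ k.divisors, Nat.totient (k / d) * F d := by
  rw [← Finset.sum_fiberwise_of_maps_to
    (g := fun m => Nat.gcd m k) (t := k.divisors)
    (fun m _ => Nat.mem_divisors.mpr ⟨Nat.gcd_dvd_right _ _, hk.ne'⟩)
    (fun m => F (Nat.gcd m k))]
  apply Finset.sum_congr rfl
  intro d hd
  obtain ⟨hdk, -⟩ := Nat.mem_divisors.mp hd
  have hdpos : 0 < d := Nat.pos_of_dvd_of_pos hdk hk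
  obtain ⟨e, rfl⟩ := hdk
  have hcard : ((Finset.range (d * e)).filter (fun m => Nat.gcd m (d * e) = d)).card
      = Nat.totient e := count_gcd d e hdpos
  have he : d * e / d = e := Nat.mul_div_cancel_left e hdpos
  calc ∑ m ∈ (Finset.range (d * e)).filter (fun m => Nat.gcd m (d * e) = d), F (Nat.gcd m (d * e))
      = ∑ m ∈ (Finset.range (d * e)).filter (fun m => Nat.gcd m (d * e) = d), F d := by
        apply Finset.sum_congr rfl
        intro m hm
        rw [(Finset.mem_filter.mp hm).2]
    _ = Nat.totient (d * e / d) * F d := by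
        rw [Finset.sum_const, smul_eq_mul, hcard, he]

/-- Cyclic rotation equivalence on compositions. -/
def CyclicRel (n k : ℕ) (a b : Composition' n k) : Prop :=
  ∃ r : Fin k, ∀ i, (b : Fin k → ℕ) i = (a : Fin k → ℕ) (i + r)

/-- The number of necklaces (cyclic classes of compositions of `n` into `k`
positive parts) is `(1/k) ∑_{d ∣ gcd(n,k)} φ(d) C(n/d - 1, k/d - 1)`. -/
theorem necklace_count (n k : ℕ) (hk : 1 ≤ k) (hkn : k ≤ n) :
    k * Nat.card (Quot (CyclicRel n k)) =
      ∑ d ∈ (Nat.gcd n k).divisors,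
        Nat.totient d * Nat.choose (n / d - 1) (k / d - 1) := by
  haveI : NeZero k := ⟨by omega⟩
  have hn : 1 ≤ n := le_trans hk hkn
  have hkpos : 0 < k := hk
  -- identify the quotient with the orbit quotient
  have hrel : ∀ a b : Composition' n k, CyclicRel n k a b ↔
      (AddAction.orbitRel (Fin k) (Composition' n k)).r a b := by
    intro a b
    constructor
    · rintro ⟨r, hr⟩
      have hb : b = r +ᵥ a := Subtype.ext (funext fun i => hr i)
      refine ⟨-r, ?_⟩
      show (-r) +ᵥ b = a
      rw [hb, ← add_vadd, neg_add_cancel, zero_vadd]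
    · rintro ⟨g, hg⟩
      have hb : b = (-g) +ᵥ a := by
        rw [← hg, ← add_vadd, neg_add_cancel, zero_vadd]
      exact ⟨-g, fun i => congrFun (congrArg Subtype.val hb) i⟩
  have hquot : Nat.card (Quot (CyclicRel n k))
      = Nat.card (Quotient (AddAction.orbitRel (Fin k) (Composition' n k))) :=
    Nat.card_congr (Quot.congrRight hrel)
  -- Burnside
  haveI : Fintype (Composition' n k) := Fintype.ofFinite _
  haveI : ∀ g : Fin k, Fintype (AddAction.fixedBy (Composition' n k) g) :=
    fun _ => Fintype.ofFinite _
  haveI : Fintype (Quotient (AddAction.orbitRel (Fin k) (Composition' n k))) :=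
    Fintype.ofFinite _
  have hburn := AddAction.sum_card_fixedBy_eq_card_orbits_mul_card_addGroup
    (Fin k) (Composition' n k)
  rw [Fintype.card_fin] at hburn
  have hL : k * Nat.card (Quot (CyclicRel n k))
      = ∑ g : Fin k, Fintype.card (AddAction.fixedBy (Composition' n k) g) := by
    rw [hquot, Nat.card_eq_fintype_card, hburn, mul_comm]
  rw [hL]
  -- compute each fixed-point count
  have hfix : ∀ g : Fin k, Fintype.card (AddAction.fixedBy (Composition' n k) g)
      = (fun d => if (k / d) ∣ n then
          Nat.choose (n / (k / d) - 1) (d - 1) else 0) (Nat.gcd g.val k) := by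
    intro g
    rw [← Nat.card_eq_fintype_card]
    exact fixedBy_card hn g
  rw [Finset.sum_congr rfl (fun g _ => hfix g)]
  rw [Fin.sum_univ_eq_sum_range
    (fun m => (fun d => if (k / d) ∣ n then
      Nat.choose (n / (k / d) - 1) (d - 1) else 0) (Nat.gcd m k)) k]
  rw [gcd_sum k hkpos (fun d => if (k / d) ∣ n then
    Nat.choose (n / (k / d) - 1) (d - 1) else 0)]
  rw [← Nat.sum_div_divisors k (fun d => Nat.totient (k / d) *
    ((fun d' => if (k / d') ∣ n then Nat.choose (n / (k / d') - 1) (d' - 1) else 0) d))]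
  have hstep : ∀ d ∈ k.divisors,
      Nat.totient (k / (k / d)) *
        ((fun d' => if (k / d') ∣ n then Nat.choose (n / (k / d') - 1) (d' - 1) else 0) (k / d))
      = if d ∣ n then Nat.totient d * Nat.choose (n / d - 1) (k / d - 1) else 0 := by
    intro d hd
    obtain ⟨hdk, -⟩ := Nat.mem_divisors.mp hd
    have h1 : k / (k / d) = d := Nat.div_div_self hdk hkpos.ne'
    simp only []
    rw [h1]
    by_cases hdn : d ∣ n
    · rw [if_pos hdn, if_pos hdn]
    · rw [if_neg hdn, if_neg hdn, mul_zero]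
  rw [Finset.sum_congr rfl hstep]
  rw [← Finset.sum_filter]
  congr 1
  ext d
  simp only [Finset.mem_filter, Nat.mem_divisors, Nat.dvd_gcd_iff]
  constructor
  · rintro ⟨⟨h1, -⟩, h2⟩
    exact ⟨⟨h2, h1⟩, (Nat.gcd_pos_of_pos_right n hkpos).ne'⟩
  · rintro ⟨⟨h1, h2⟩, -⟩
    exact ⟨⟨h2, hkpos.ne'⟩, h1⟩
end

section
/- For positive even integers n₁ and k₁ with n₁ ≥ k₁ ≥ 2, the coefficient of t^{n₁} in the formal power series (t/(1−t))² · (t²/(1−t²))^{k₁/2 − 1} equals C(n₁/2, k₁/2) + C(n₁/2 − 1, k₁/2). -/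
open PowerSeries Finset

private lemma sum_even_ite (g : ℕ → ℚ) (s : ℕ) :
    ∑ i ∈ Finset.range (2*s+1), (if 2 ∣ i then g (i/2) else 0)
      = ∑ t ∈ Finset.range (s+1), g t := by
  induction s with
  | zero => simp
  | succ s ih =>
    have h1 : 2*(s+1)+1 = (2*s+1) + 1 + 1 := by ring
    have l1 : ∑ i ∈ Finset.range ((2*s+1)+1+1), (if 2 ∣ i then g (i/2) else 0)
        = (∑ i ∈ Finset.range (2*s+1), (if 2 ∣ i then g (i/2) else 0))
          + (if 2 ∣ 2*s+1 then g ((2*s+1)/2) else 0)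
          + (if 2 ∣ 2*s+1+1 then g ((2*s+1+1)/2) else 0) := by
      rw [Finset.sum_range_succ, Finset.sum_range_succ]
    have h2 : ¬ (2 ∣ 2*s+1) := by omega
    have h3 : (2 ∣ 2*s+1+1) := by omega
    have h4 : (2*s+1+1)/2 = s+1 := by omega
    rw [h1, l1, if_neg h2, if_pos h3, h4, ih, add_zero, ← Finset.sum_range_succ g (s+1)]

private lemma sum_choose_q (d s : ℕ) :
    ∑ t ∈ Finset.range (s+1), ((t+d).choose d : ℚ) = ((s+d+1).choose (d+1) : ℚ) := by
  induction s with
  | zero => simp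
  | succ s ih =>
    have e : s+1+d = s+d+1 := by omega
    rw [Finset.sum_range_succ, ih, e, Nat.choose_succ_succ' (s+d+1) d]
    push_cast
    ring

private lemma invA : (1 - X^2 : ℚ⟦X⟧)⁻¹
    = PowerSeries.mk (fun r => if 2 ∣ r then (1:ℚ) else 0) := by
  rw [PowerSeries.inv_eq_iff_mul_eq_one (by simp)]
  ext n
  rw [mul_sub, mul_one, map_sub, PowerSeries.coeff_mul_X_pow']
  simp only [PowerSeries.coeff_mk, PowerSeries.coeff_one]
  split_ifs <;> (try norm_num) <;> omega

private lemma invB (d : ℕ) : ((1 - X^2 : ℚ⟦X⟧)⁻¹)^(d+1)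
    = PowerSeries.mk (fun r => if 2 ∣ r then ((r/2 + d).choose d : ℚ) else 0) := by
  induction d with
  | zero => rw [pow_one, invA]; simp
  | succ d ih =>
    rw [pow_succ, ih, invA]
    ext n
    rw [PowerSeries.coeff_mul, Finset.Nat.sum_antidiagonal_eq_sum_range_succ_mk]
    simp only [PowerSeries.coeff_mk]
    rcases Nat.even_or_odd n with he | ho
    · obtain ⟨s, hs⟩ := he
      have hn : n = 2*s := by omega
      subst hn
      have hstep : ∀ k ∈ Finset.range (2*s+1),
          (if 2 ∣ k then ((k/2 + d).choose d : ℚ) else 0) *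
            (if 2 ∣ (2*s - k) then (1:ℚ) else 0)
          = (if 2 ∣ k then ((k/2 + d).choose d : ℚ) else 0) := by
        intro k hk
        rw [Finset.mem_range] at hk
        by_cases h : 2 ∣ k
        · rw [if_pos h, if_pos (by omega), mul_one]
        · rw [if_neg h, zero_mul]
      rw [show (2*s).succ = 2*s+1 from rfl, Finset.sum_congr rfl hstep,
        sum_even_ite (fun t => ((t+d).choose d : ℚ)) s, sum_choose_q]
      have : 2 ∣ 2*s := by omega
      rw [if_pos this]
      congr 2
      omega
    · have hodd : ¬ (2 ∣ n) := by
        obtain ⟨c, hc⟩ := ho; omega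
      rw [if_neg hodd]
      apply Finset.sum_eq_zero
      intro k hk
      rw [Finset.mem_range] at hk
      by_cases h : 2 ∣ k
      · rw [if_neg (show ¬ 2 ∣ (n - k) by omega), mul_zero]
      · rw [if_neg h, zero_mul]

private lemma inv_one_sub : (1 - X : ℚ⟦X⟧)⁻¹ = (1 + X) * (1 - X^2)⁻¹ := by
  rw [PowerSeries.inv_eq_iff_mul_eq_one (by simp)]
  have h : ((1:ℚ⟦X⟧) + X) * (1 - X) = 1 - X^2 := by ring
  rw [mul_assoc, mul_comm ((1 - X^2 : ℚ⟦X⟧)⁻¹), ← mul_assoc, h,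
    PowerSeries.mul_inv_cancel _ (by simp)]

/-- For even `n₁ ≥ k₁ ≥ 2` with `k₁` even, the coefficient of `t^{n₁}` in
`(t/(1-t))² (t²/(1-t²))^{k₁/2-1}` is `C(n₁/2, k₁/2) + C(n₁/2-1, k₁/2)`. -/
theorem coeff_type3_even (n₁ k₁ : ℕ) (hn : Even n₁) (hk : Even k₁)
    (h2 : 2 ≤ k₁) (hnk : k₁ ≤ n₁) :
    PowerSeries.coeff (R := ℚ) n₁
        ((PowerSeries.X * (1 - PowerSeries.X)⁻¹) ^ 2 *
          (PowerSeries.X ^ 2 * (1 - PowerSeries.X ^ 2)⁻¹) ^ (k₁ / 2 - 1)) =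
      (Nat.choose (n₁ / 2) (k₁ / 2) : ℚ) + (Nat.choose (n₁ / 2 - 1) (k₁ / 2) : ℚ) := by
  obtain ⟨m, hm⟩ := hn
  obtain ⟨j, hj⟩ := hk
  have hm' : n₁ = 2*m := by omega
  have hj1 : 1 ≤ j := by omega
  obtain ⟨j', rfl⟩ : ∃ j'', j = j'' + 1 := ⟨j - 1, by omega⟩
  have hk2 : k₁ / 2 = j' + 1 := by omega
  have hn2 : n₁ / 2 = m := by omega
  have hmj : j' + 1 ≤ m := by omega
  rw [hk2, hn2, hm']
  have hS : (X * (1 - X)⁻¹) ^ 2 * (X ^ 2 * (1 - X ^ 2)⁻¹) ^ (j' + 1 - 1)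
      = X^(2*j'+2) * ((1 + X)^2 * ((1 - X^2 : ℚ⟦X⟧)⁻¹)^(j'+2)) := by
    rw [show j' + 1 - 1 = j' from rfl, inv_one_sub]
    ring
  rw [hS, PowerSeries.coeff_X_pow_mul', if_pos (by omega : 2*j'+2 ≤ 2*m)]
  set r := 2*m - (2*j'+2) with hr
  rw [show j' + 2 = (j'+1) + 1 from rfl, invB (j'+1)]
  have hC2 : (PowerSeries.C (R := ℚ) 2 : ℚ⟦X⟧) = 2 := by
    simp [map_ofNat]
  have hg : ((1:ℚ⟦X⟧) + X)^2 * (PowerSeries.mk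
        (fun p => if 2 ∣ p then ((p/2 + (j'+1)).choose (j'+1) : ℚ) else 0))
      = (PowerSeries.mk (fun p => if 2 ∣ p then ((p/2 + (j'+1)).choose (j'+1) : ℚ) else 0))
        + PowerSeries.C (R := ℚ) 2 * (X^1 * (PowerSeries.mk
            (fun p => if 2 ∣ p then ((p/2 + (j'+1)).choose (j'+1) : ℚ) else 0)))
        + X^2 * (PowerSeries.mk
            (fun p => if 2 ∣ p then ((p/2 + (j'+1)).choose (j'+1) : ℚ) else 0)) := by
    rw [hC2]; ring
  rw [hg, map_add, map_add, PowerSeries.coeff_C_mul,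
    PowerSeries.coeff_X_pow_mul', PowerSeries.coeff_X_pow_mul',
    PowerSeries.coeff_mk]
  have hrev : 2 ∣ r := by omega
  rw [if_pos hrev, show r/2 + (j'+1) = m by omega]
  by_cases hcase : m = j' + 1
  · have hr0 : r = 0 := by omega
    rw [hr0]
    norm_num
    exact Nat.choose_eq_zero_of_lt (by omega)
  · have hr2 : 2 ≤ r := by omega
    rw [if_pos (by omega : 1 ≤ r), if_pos hr2, PowerSeries.coeff_mk, PowerSeries.coeff_mk,
      if_neg (show ¬ 2 ∣ (r-1) by omega), if_pos (show 2 ∣ (r-2) by omega),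
      show (r-2)/2 + (j'+1) = m - 1 by omega]
    ring
end

section
/- For odd positive integers n₁ and k₁ with n₁ ≥ k₁, the coefficient of t^{n₁} in the formal power series (t/(1−t)) · (t²/(1−t²))^{(k₁−1)/2} equals C((n₁−1)/2, (k₁−1)/2). -/
open PowerSeries

noncomputable def Gaux (m : ℕ) : PowerSeries ℚ :=
  PowerSeries.mk fun n => if 2 * m + 1 ≤ n then (Nat.choose ((n - 1) / 2) m : ℚ) else 0

lemma Gaux_base : (1 - X) * Gaux 0 = (X : PowerSeries ℚ) := by
  ext n
  rw [sub_mul, one_mul, map_sub]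
  rcases n with _ | n
  · simp [Gaux, coeff_mk]
  · rw [coeff_succ_X_mul, Gaux, coeff_mk, coeff_mk, coeff_X]
    rcases n with _ | n
    · norm_num
    · simp [Nat.succ_le_succ, Nat.succ_ne_zero]

lemma Gaux_step (m : ℕ) : (1 - X ^ 2) * Gaux (m + 1) = X ^ 2 * Gaux m := by
  ext n
  rw [sub_mul, one_mul, map_sub, coeff_X_pow_mul', coeff_X_pow_mul']
  rcases lt_or_ge n 2 with h2 | h2
  · rw [if_neg (by omega), if_neg (by omega), Gaux, coeff_mk, sub_eq_zero]
    rw [if_neg (by omega)]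
  · rw [if_pos h2, if_pos h2]
    obtain ⟨n', rfl⟩ : ∃ n', n = n' + 2 := ⟨n - 2, by omega⟩
    simp only [Gaux, coeff_mk, Nat.add_sub_cancel]
    rcases lt_or_ge n' (2 * m + 1) with h | h
    · rw [if_neg (by omega), if_neg (by omega), if_neg (by omega)]
      ring
    · rw [if_pos (by omega : 2 * (m + 1) + 1 ≤ n' + 2), if_pos h]
      rcases lt_or_ge n' (2 * m + 3) with h' | h'
      · rw [if_neg (by omega)]
        have e1 : (n' + 2 - 1) / 2 = m + 1 := by omega
        have e2 : (n' - 1) / 2 = m := by omega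
        rw [e1, e2, Nat.choose_self, Nat.choose_self]
        norm_num
      · rw [if_pos (by omega)]
        have e1 : (n' + 2 - 1) / 2 = (n' - 1) / 2 + 1 := by omega
        rw [e1]
        set j := (n' - 1) / 2
        rw [Nat.choose_succ_succ]
        push_cast
        ring

lemma oneSubX_ne : constantCoeff (1 - X : PowerSeries ℚ) ≠ 0 := by simp

lemma oneSubX2_ne : constantCoeff (1 - X ^ 2 : PowerSeries ℚ) ≠ 0 := by simp

lemma Gaux_eq (m : ℕ) :
    X * (1 - X)⁻¹ * (X ^ 2 * (1 - X ^ 2)⁻¹) ^ m = Gaux m := by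
  induction m with
  | zero =>
    rw [pow_zero, mul_one]
    calc X * (1 - X)⁻¹ = (1 - X) * Gaux 0 * (1 - X)⁻¹ := by rw [Gaux_base]
      _ = Gaux 0 * ((1 - X) * (1 - X)⁻¹) := by ring
      _ = Gaux 0 := by rw [PowerSeries.mul_inv_cancel _ oneSubX_ne, mul_one]
  | succ m ih =>
    rw [pow_succ, ← mul_assoc, ih]
    have h := Gaux_step m
    have : Gaux (m + 1) = (1 - X ^ 2)⁻¹ * (X ^ 2 * Gaux m) := by
      rw [← h, ← mul_assoc, PowerSeries.inv_mul_cancel _ oneSubX2_ne, one_mul]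
    rw [this]; ring

/-- For odd `n₁ ≥ k₁ ≥ 1` with `k₁` odd, the coefficient of `t^{n₁}` in
`(t/(1-t)) (t²/(1-t²))^{(k₁-1)/2}` is `C((n₁-1)/2, (k₁-1)/2)`. -/
theorem coeff_type3_odd_odd (n₁ k₁ : ℕ) (hn : Odd n₁) (hk : Odd k₁)
    (hk1 : 1 ≤ k₁) (hnk : k₁ ≤ n₁) :
    PowerSeries.coeff (R := ℚ) n₁
        ((PowerSeries.X * (1 - PowerSeries.X)⁻¹) *
          (PowerSeries.X ^ 2 * (1 - PowerSeries.X ^ 2)⁻¹) ^ ((k₁ - 1) / 2)) =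
      (Nat.choose ((n₁ - 1) / 2) ((k₁ - 1) / 2) : ℚ) := by
  rw [Gaux_eq, Gaux, coeff_mk, if_pos]
  obtain ⟨a, ha⟩ := hk
  omega
end

section
/- For an even positive integer n₁ and an odd positive integer k₁ with n₁ ≥ k₁, the coefficient of t^{n₁} in the formal power series (t/(1−t)) · (t²/(1−t²))^{(k₁−1)/2} equals C(n₁/2 − 1, (k₁−1)/2). -/
open PowerSeries

open Finset

noncomputable def S1 : ℚ⟦X⟧ := PowerSeries.mk fun n => if 1 ≤ n then 1 else 0
noncomputable def S2 : ℚ⟦X⟧ := PowerSeries.mk fun n => if Even n ∧ 2 ≤ n then 1 else 0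

lemma S1_eq : (PowerSeries.X : ℚ⟦X⟧) * (1 - PowerSeries.X)⁻¹ = S1 := by
  rw [eq_comm, PowerSeries.eq_mul_inv_iff_mul_eq (by simp)]
  ext n
  rw [mul_sub, mul_one, map_sub]
  rcases n with _ | m
  · simp [S1]
  · rw [PowerSeries.coeff_succ_mul_X]
    simp only [S1, coeff_mk, PowerSeries.coeff_X]
    rcases m with _ | m' <;> simp

lemma S2_eq : (PowerSeries.X : ℚ⟦X⟧) ^ 2 * (1 - PowerSeries.X ^ 2)⁻¹ = S2 := by
  rw [eq_comm, PowerSeries.eq_mul_inv_iff_mul_eq (by simp)]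
  ext n
  rw [mul_sub, mul_one, map_sub]
  match n with
  | 0 => simp [S2]
  | 1 =>
    have : (PowerSeries.coeff (R := ℚ) 1) (S2 * X ^ 2) = 0 := by
      rw [pow_two, ← mul_assoc, PowerSeries.coeff_succ_mul_X, PowerSeries.coeff_zero_mul_X]
    rw [this]
    simp [S2, PowerSeries.coeff_X_pow]
  | (m + 2) =>
    rw [PowerSeries.coeff_mul_X_pow]
    simp only [S2, coeff_mk, PowerSeries.coeff_X_pow]
    by_cases h : Even m
    · have h1 : Even (m + 2) := by rcases h with ⟨r, hr⟩; exact ⟨r + 1, by omega⟩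
      by_cases hm : m = 0
      · subst hm; norm_num
      · have h2 : (2:ℕ) ≤ m := by
          rcases h with ⟨r, hr⟩; omega
        simp [h, h1, h2, hm, show ¬ (m + 2 = 2) by omega, show (2:ℕ) ≤ m + 2 by omega]
    · have h1 : ¬ Even (m + 2) := fun hc => h (by rcases hc with ⟨r, hr⟩; exact ⟨r - 1, by omega⟩)
      have hm0 : m ≠ 0 := by rintro rfl; exact h Even.zero
      simp [h, h1, hm0]

lemma hs (K m : ℕ) : ∑ d ∈ range K, Nat.choose d m = Nat.choose K (m+1) := by
  induction K with
  | zero => simp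
  | succ K ih => rw [sum_range_succ, ih, Nat.choose_succ_succ, add_comm]

lemma sumlem (n m : ℕ) :
    ∑ i ∈ range (n+1), ((if 1 ≤ i then (((i-1)/2).choose m : ℚ) else 0) *
      (if Even (n-i) ∧ 2 ≤ n-i then 1 else 0)) = (((n-1)/2).choose (m+1) : ℚ) := by
  set K := (n-1)/2 with hK
  have step1 : ∀ i, ((if 1 ≤ i then (((i-1)/2).choose m : ℚ) else 0) *
      (if Even (n-i) ∧ 2 ≤ n-i then 1 else 0)) =
      if (1 ≤ i ∧ Even (n-i) ∧ 2 ≤ n-i) then (((i-1)/2).choose m : ℚ) else 0 := by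
    intro i
    split_ifs with h1 h2 h3 h4 h5 <;> simp_all <;> tauto
  rw [Finset.sum_congr rfl fun i _ => step1 i, ← Finset.sum_filter]
  have himg : (range (n+1)).filter (fun i => 1 ≤ i ∧ Even (n-i) ∧ 2 ≤ n-i) =
      (Icc 1 K).image (fun c => n - 2*c) := by
    ext i
    simp only [mem_filter, mem_range, mem_image, mem_Icc, Nat.even_iff]
    constructor
    · rintro ⟨h1, h2, h3, h4⟩
      exact ⟨(n-i)/2, ⟨by omega, by omega⟩, by omega⟩
    · rintro ⟨c, ⟨hc1, hc2⟩, rfl⟩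
      omega
  rw [himg, Finset.sum_image (by intro a ha b hb hab; simp only [Finset.coe_Icc, Set.mem_Icc, mem_Icc] at ha hb hab; omega)]
  have step2 : ∀ c ∈ Icc 1 K, (((n - 2*c - 1)/2).choose m : ℚ) = ((K - c).choose m : ℚ) := by
    intro c hc
    simp only [mem_Icc] at hc
    congr 2
    omega
  rw [Finset.sum_congr rfl step2]
  have step3 : ∑ x ∈ Icc 1 K, ((K - x).choose m : ℚ) = ∑ d ∈ range K, (d.choose m : ℚ) := by
    apply Finset.sum_nbij' (fun x => K - x) (fun d => K - d) <;>
      intros a ha <;> simp only [mem_Icc, mem_range] at * <;> first | omega | (congr 1; omega)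
  rw [step3, ← Nat.cast_sum, hs]

lemma coeff_S (m : ℕ) : ∀ n : ℕ, 1 ≤ n →
    PowerSeries.coeff (R := ℚ) n (S1 * S2 ^ m) = (((n-1)/2).choose m : ℚ) := by
  induction m with
  | zero =>
    intro n hn
    simp [S1, hn]
  | succ m ih =>
    intro n hn
    have h0 : PowerSeries.coeff (R := ℚ) 0 (S1 * S2 ^ m) = 0 := by
      simp [coeff_mul, S1]
    rw [pow_succ, ← mul_assoc, coeff_mul, Finset.Nat.sum_antidiagonal_eq_sum_range_succ_mk]
    have step : ∀ i ∈ range (n+1),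
        PowerSeries.coeff (R := ℚ) i (S1 * S2 ^ m) * PowerSeries.coeff (R := ℚ) (n - i) S2 =
        (if 1 ≤ i then (((i-1)/2).choose m : ℚ) else 0) *
          (if Even (n-i) ∧ 2 ≤ n-i then 1 else 0) := by
      intro i _
      rcases Nat.eq_zero_or_pos i with rfl | hi
      · simp [h0]
      · rw [ih i hi, if_pos (by omega : 1 ≤ i)]
        simp [S2]
    rw [Finset.sum_congr rfl step, sumlem]

/-- For even `n₁` and odd `k₁` with `n₁ ≥ k₁ ≥ 1`, the coefficient of `t^{n₁}`
in `(t/(1-t)) (t²/(1-t²))^{(k₁-1)/2}` is `C(n₁/2 - 1, (k₁-1)/2)`. -/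
theorem coeff_type3_even_odd (n₁ k₁ : ℕ) (hn : Even n₁) (hk : Odd k₁)
    (hn1 : 0 < n₁) (hk1 : 1 ≤ k₁) (hnk : k₁ ≤ n₁) :
    PowerSeries.coeff (R := ℚ) n₁
        ((PowerSeries.X * (1 - PowerSeries.X)⁻¹) *
          (PowerSeries.X ^ 2 * (1 - PowerSeries.X ^ 2)⁻¹) ^ ((k₁ - 1) / 2)) =
      (Nat.choose (n₁ / 2 - 1) ((k₁ - 1) / 2) : ℚ) := by
  rw [S1_eq, S2_eq, coeff_S _ n₁ hn1]
  congr 2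
  rcases hn with ⟨r, hr⟩
  omega
end
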